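/- For all integers 0 ≤ m ≤ d, the set Int_m ⊆ ({•,+,−}^d)² has exactly (d choose m)·2^{d−m} elements. -/

import Mathlib

/-- The three possible entries of a cell label of the hypercube:
`dot` = `•` (a spanned direction), `pls` = `+`, `mns` = `−`. -/
inductive Sgn : Type
  | dot : Sgn
  | pls : Sgn
  | mns : Sgn
  deriving DecidableEq

instance : Fintype Sgn :=
  ⟨{Sgn.dot, Sgn.pls, Sgn.mns}, fun x => by cases x <;> simp⟩

/-- A cell of the `d`-dimensional hypercube, labeled by a tuple in `{•,+,−}^d`. -/
abbrev Cell (d : ℕ) := Fin d → Sgn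

/-- A `ℤ₂`-cochain on the `d`-dimensional hypercube. -/
abbrev Cochain (d : ℕ) := Cell d → ZMod 2

/-- The top cell `(•,…,•)`. -/
def topCell (d : ℕ) : Cell d := fun _ => Sgn.dot

/-- The set of coordinates of a cell labeled `•`. -/
def dots {d : ℕ} (w : Cell d) : Finset (Fin d) :=
  Finset.univ.filter (fun j => w j = Sgn.dot)

/-- The coboundary of a `ℤ₂`-cochain: `(δα)(w)` is the sum of `α` over all cells obtained
from `w` by replacing exactly one entry equal to `•` by `+` or by `−`. -/
def delta {d : ℕ} (α : Cochain d) : Cochain d := fun w =>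
  ∑ j ∈ dots w, (α (Function.update w j Sgn.pls) + α (Function.update w j Sgn.mns))

/-- The set of coordinates where both `z` and `z'` are `•`. -/
def bothDot {d : ℕ} (z z' : Cell d) : Finset (Fin d) :=
  Finset.univ.filter (fun j => z j = Sgn.dot ∧ z' j = Sgn.dot)

/-- The allowed values of `(z_j, z'_j)` at a coordinate `j` not in the common-`•` set `I`:
`(+,•)` or `(•,−)` when `ℓ(j) = #{i ∈ I : i < j}` is even, and `(−,•)` or `(•,+)` when it
is odd. -/
def pairCond {d : ℕ} (I : Finset (Fin d)) (j : Fin d) (a b : Sgn) : Prop :=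
  if (I.filter (fun i => i < j)).card % 2 = 0 then
    (a = Sgn.pls ∧ b = Sgn.dot) ∨ (a = Sgn.dot ∧ b = Sgn.mns)
  else
    (a = Sgn.mns ∧ b = Sgn.dot) ∨ (a = Sgn.dot ∧ b = Sgn.pls)

/-- The pairs `(z,z')` appearing in the `m`-th higher cup product evaluated on the cell `w`:
the entries of `w` equal to `+` or `−` are fixed in both arguments, there are exactly `m`
coordinates where both `z` and `z'` are `•`, and at the remaining `•`-coordinates of `w`
the parity condition `pairCond` holds. -/
def IntPair {d : ℕ} (m : ℕ) (w z z' : Cell d) : Prop :=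
  (∀ j, w j ≠ Sgn.dot → z j = w j ∧ z' j = w j) ∧
    (bothDot z z').card = m ∧
    ∀ j, w j = Sgn.dot → j ∉ bothDot z z' → pairCond (bothDot z z') j (z j) (z' j)

open Classical in
/-- The finite set of pairs in `Int_m` relative to the cell `w`. -/
noncomputable def intPairs {d : ℕ} (m : ℕ) (w : Cell d) : Finset (Cell d × Cell d) :=
  Finset.univ.filter (fun p => IntPair m w p.1 p.2)

/-- The higher cup product `α ∪_m β` of `ℤ₂`-cochains:
`(α ∪_m β)(w) = Σ_{(z,z') ∈ Int_m(w)} α(z)·β(z')`. -/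
noncomputable def cup {d : ℕ} (m : ℕ) (α β : Cochain d) : Cochain d := fun w =>
  ∑ p ∈ intPairs m w, α p.1 * β p.2

/-! Sort the pairs of `Int_m` by their common-`•` set `I`, an `m`-subset of the coordinates.
Once `I` is fixed, the condition at each remaining coordinate `j` depends only on `I` and `j`,
and allows exactly two values of `(z_j, z'_j)`, neither of them `(•,•)`. So each of the
`d.choose m` fibres is a product of `d - m` two-element sets. -/

def allowedPairs {d : ℕ} (I : Finset (Fin d)) (j : Fin d) : Finset (Sgn × Sgn) :=
  if j ∈ I then {(Sgn.dot, Sgn.dot)}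
  else if (I.filter (fun i => i < j)).card % 2 = 0 then {(Sgn.pls, Sgn.dot), (Sgn.dot, Sgn.mns)}
  else {(Sgn.mns, Sgn.dot), (Sgn.dot, Sgn.pls)}

section

variable {d : ℕ} {I : Finset (Fin d)} {j : Fin d} {a b : Sgn}

lemma mem_intPairs {m : ℕ} {w : Cell d} {p : Cell d × Cell d} :
    p ∈ intPairs m w ↔ IntPair m w p.1 p.2 := by
  simp [intPairs]

lemma mem_bothDot {z z' : Cell d} : j ∈ bothDot z z' ↔ z j = Sgn.dot ∧ z' j = Sgn.dot := by
  simp [bothDot]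

lemma not_dot_and_dot_of_pairCond (h : pairCond I j a b) : ¬(a = Sgn.dot ∧ b = Sgn.dot) := by
  unfold pairCond at h
  split_ifs at h <;> rcases h with ⟨rfl, rfl⟩ | ⟨rfl, rfl⟩ <;> simp

lemma mem_allowedPairs_of_mem (hj : j ∈ I) :
    (a, b) ∈ allowedPairs I j ↔ a = Sgn.dot ∧ b = Sgn.dot := by
  simp [allowedPairs, hj]

lemma mem_allowedPairs_of_notMem (hj : j ∉ I) :
    (a, b) ∈ allowedPairs I j ↔ pairCond I j a b := by
  unfold allowedPairs pairCond
  split_ifs <;> simp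

lemma card_allowedPairs : (allowedPairs I j).card = if j ∈ I then 1 else 2 := by
  unfold allowedPairs
  split_ifs <;> rfl

lemma prod_card_allowedPairs : ∏ j, (allowedPairs I j).card = 2 ^ (d - I.card) := by
  simp [card_allowedPairs, Finset.prod_ite, Finset.filter_not, Finset.card_sdiff]

lemma intPair_topCell_and_bothDot_eq_iff {z z' : Cell d} :
    IntPair I.card (topCell d) z z' ∧ bothDot z z' = I ↔
      ∀ j, (z j, z' j) ∈ allowedPairs I j := by
  constructor
  · rintro ⟨⟨-, -, hcond⟩, rfl⟩ j
    by_cases hj : j ∈ bothDot z z'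
    · exact (mem_allowedPairs_of_mem hj).2 (mem_bothDot.1 hj)
    · exact (mem_allowedPairs_of_notMem hj).2 (hcond j rfl hj)
  · intro h
    have hbothDot : bothDot z z' = I := by
      ext j
      rw [mem_bothDot]
      by_cases hj : j ∈ I
      · simpa [hj] using (mem_allowedPairs_of_mem hj).1 (h j)
      · simpa [hj] using not_dot_and_dot_of_pairCond ((mem_allowedPairs_of_notMem hj).1 (h j))
    refine ⟨⟨fun j hj => absurd rfl hj, by rw [hbothDot], fun j _ hj => ?_⟩, hbothDot⟩
    rw [hbothDot] at hj ⊢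
    exact (mem_allowedPairs_of_notMem hj).1 (h j)

lemma card_intPairs_topCell_filter_bothDot_eq :
    ((intPairs I.card (topCell d)).filter (fun p => bothDot p.1 p.2 = I)).card =
      2 ^ (d - I.card) := by
  rw [← prod_card_allowedPairs, ← Fintype.card_piFinset]
  refine Finset.card_equiv (Equiv.arrowProdEquivProdArrow _ _ _).symm fun p => ?_
  simp [mem_intPairs, Fintype.mem_piFinset, intPair_topCell_and_bothDot_eq_iff]

end

theorem intPairs_card (d m : ℕ) :
    (intPairs m (topCell d)).card = d.choose m * 2 ^ (d - m) := by
  have hbothDot : ∀ p ∈ intPairs m (topCell d),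
      bothDot p.1 p.2 ∈ (Finset.univ : Finset (Fin d)).powersetCard m :=
    fun p hp => Finset.mem_powersetCard_univ.2 (mem_intPairs.1 hp).2.1
  have hfibre : ∀ I ∈ (Finset.univ : Finset (Fin d)).powersetCard m,
      ((intPairs m (topCell d)).filter (fun p => bothDot p.1 p.2 = I)).card = 2 ^ (d - m) := by
    intro I hI
    obtain rfl := Finset.mem_powersetCard_univ.1 hI
    exact card_intPairs_topCell_filter_bothDot_eq
  rw [Finset.card_eq_sum_card_fiberwise hbothDot, Finset.sum_congr rfl hfibre, Finset.sum_const,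
    Finset.card_powersetCard, Finset.card_univ, Fintype.card_fin, smul_eq_mul]
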